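/- If h' = (1,h'_1,...,h'_e) and h'' = (1,h''_1,...,h''_e) are pure O-sequences of the same socle degree e, then (1, h'_1+h''_1, ..., h'_e+h''_e) is a pure O-sequence. -/

import Mathlib

open scoped Classical

/-- total degree of a monomial, recorded as an exponent vector -/
def mdeg {r : ℕ} (m : Fin r → ℕ) : ℕ := ∑ i, m i

/-- a monomial order ideal: a finite nonempty set of monomials closed under divisibility -/
def IsOrderIdeal {r : ℕ} (X : Finset (Fin r → ℕ)) : Prop :=
  X.Nonempty ∧ ∀ m ∈ X, ∀ m' : Fin r → ℕ, m' ≤ m → m' ∈ X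

/-- the maximal monomials of `X` under divisibility -/
noncomputable def maxMons {r : ℕ} (X : Finset (Fin r → ℕ)) : Finset (Fin r → ℕ) :=
  X.filter fun m => ∀ m' ∈ X, m ≤ m' → m' = m

/-- `X` is pure of socle degree `e`: all maximal monomials have degree `e` -/
def IsPure {r : ℕ} (X : Finset (Fin r → ℕ)) (e : ℕ) : Prop :=
  ∀ m ∈ maxMons X, mdeg m = e

/-- the `h`-vector of `X`: the number of monomials of each degree -/
noncomputable def hVec {r : ℕ} (X : Finset (Fin r → ℕ)) (i : ℕ) : ℕ :=
  (X.filter fun m => mdeg m = i).card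

/-- a finite list is a pure `O`-sequence if it is the `h`-vector of a pure monomial
order ideal (of socle degree `length - 1`) -/
def IsPureOSeqList (h : List ℕ) : Prop :=
  ∃ (r : ℕ) (X : Finset (Fin r → ℕ)), IsOrderIdeal X ∧ IsPure X (h.length - 1) ∧
    ∀ i, hVec X i = h.getD i 0

/-- `h : ℕ → ℕ` is a pure `O`-sequence of socle degree `e` -/
def IsPureOSeqFun (e : ℕ) (h : ℕ → ℕ) : Prop :=
  ∃ (r : ℕ) (X : Finset (Fin r → ℕ)), IsOrderIdeal X ∧ IsPure X e ∧ ∀ i, hVec X i = h i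

/-!
Realize `h'` and `h''` by pure order ideals `X'` and `X''` in disjoint sets of variables and take
their union. A monomial of the union is maximal exactly when it is maximal in its own summand, so
the union is pure of the same socle degree; the two summands meet only in the monomial `1`, so
the `h`-vectors add in every positive degree.
-/

open Finset

namespace Fin

variable {α : Type*} {p q : ℕ}

theorem append_le_append_iff [LE α] {a c : Fin p → α} {b d : Fin q → α} :
    append a b ≤ append c d ↔ a ≤ c ∧ b ≤ d := by
  refine ⟨fun h => ⟨fun i => ?_, fun i => ?_⟩, fun ⟨hac, hbd⟩ i => ?_⟩
  · simpa using h (castAdd q i)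
  · simpa using h (natAdd p i)
  · induction i using addCases <;> simp [hac _, hbd _]

theorem exists_append_of_le_append [LE α] {n : Fin (p + q) → α} {a : Fin p → α}
    {b : Fin q → α} (h : n ≤ append a b) : ∃ a' ≤ a, ∃ b' ≤ b, n = append a' b' := by
  rw [← append_castAdd_natAdd (f := n)] at h ⊢
  obtain ⟨ha, hb⟩ := append_le_append_iff.1 h
  exact ⟨_, ha, _, hb, rfl⟩

end Fin

section Monomials

variable {p q r : ℕ}

theorem mdeg_eq_zero_iff {m : Fin r → ℕ} : mdeg m = 0 ↔ m = 0 := by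
  simp [mdeg, Finset.sum_eq_zero_iff, funext_iff]

theorem mdeg_append (a : Fin p → ℕ) (b : Fin q → ℕ) :
    mdeg (Fin.append a b) = mdeg a + mdeg b := by
  simp [mdeg, Fin.sum_univ_add]

def inlMon (q : ℕ) : (Fin p → ℕ) ↪o (Fin (p + q) → ℕ) :=
  OrderEmbedding.ofMapLEIff (Fin.append · 0) fun _ _ => by simp [Fin.append_le_append_iff]

def inrMon (p : ℕ) : (Fin q → ℕ) ↪o (Fin (p + q) → ℕ) :=
  OrderEmbedding.ofMapLEIff (Fin.append 0) fun _ _ => by simp [Fin.append_le_append_iff]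

@[simp] theorem mdeg_inlMon (a : Fin p → ℕ) : mdeg (inlMon q a) = mdeg a := by
  change mdeg (Fin.append a 0) = _
  rw [mdeg_append]
  simp [mdeg]

@[simp] theorem mdeg_inrMon (b : Fin q → ℕ) : mdeg (inrMon p b) = mdeg b := by
  change mdeg (Fin.append 0 b) = _
  rw [mdeg_append]
  simp [mdeg]

theorem exists_eq_inlMon_of_le {n : Fin (p + q) → ℕ} {a : Fin p → ℕ} (h : n ≤ inlMon q a) :
    ∃ a' ≤ a, n = inlMon q a' := by
  obtain ⟨a', ha', b', hb', rfl⟩ := Fin.exists_append_of_le_append h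
  obtain rfl : b' = 0 := funext fun i => Nat.le_zero.1 (hb' i)
  exact ⟨a', ha', rfl⟩

theorem exists_eq_inrMon_of_le {n : Fin (p + q) → ℕ} {b : Fin q → ℕ} (h : n ≤ inrMon p b) :
    ∃ b' ≤ b, n = inrMon p b' := by
  obtain ⟨a', ha', b', hb', rfl⟩ := Fin.exists_append_of_le_append h
  obtain rfl : a' = 0 := funext fun i => Nat.le_zero.1 (ha' i)
  exact ⟨b', hb', rfl⟩

theorem inlMon_eq_inrMon_iff {a : Fin p → ℕ} {b : Fin q → ℕ} :
    inlMon q a = inrMon p b ↔ a = 0 ∧ b = 0 := by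
  change Fin.append a 0 = Fin.append 0 b ↔ _
  simp only [le_antisymm_iff, Fin.append_le_append_iff]
  tauto

end Monomials

section OrderIdeals

variable {p q r : ℕ}

theorem IsOrderIdeal.hVec_zero {X : Finset (Fin r → ℕ)} (hX : IsOrderIdeal X) : hVec X 0 = 1 := by
  obtain ⟨⟨m, hm⟩, hcl⟩ := hX
  have h0 : (0 : Fin r → ℕ) ∈ X := hcl m hm 0 fun _ => Nat.zero_le _
  rw [hVec, card_eq_one]
  refine ⟨0, ext fun n => ?_⟩
  simp only [mem_filter, mem_singleton, mdeg_eq_zero_iff]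
  exact ⟨And.right, fun hn => ⟨hn ▸ h0, hn⟩⟩

theorem hVec_map {X : Finset (Fin p → ℕ)} {f : (Fin p → ℕ) ↪ (Fin q → ℕ)}
    (hf : ∀ m, mdeg (f m) = mdeg m) (i : ℕ) : hVec (X.map f) i = hVec X i := by
  simp [hVec, filter_map, hf]

theorem hVec_union {X Y : Finset (Fin r → ℕ)} {i : ℕ} (h : ∀ m ∈ X, m ∈ Y → mdeg m ≠ i) :
    hVec (X ∪ Y) i = hVec X i + hVec Y i := by
  rw [hVec, filter_union, card_union_of_disjoint]
  · rfl
  · exact disjoint_left.2 fun m hmX hmY =>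
      h m (mem_filter.1 hmX).1 (mem_filter.1 hmY).1 (mem_filter.1 hmX).2

theorem mem_maxMons_of_map {X : Finset (Fin p → ℕ)} {Z : Finset (Fin q → ℕ)}
    {f : (Fin p → ℕ) ↪o (Fin q → ℕ)} (hXZ : ∀ b ∈ X, f b ∈ Z) {a : Fin p → ℕ} (ha : a ∈ X)
    (hmax : f a ∈ maxMons Z) : a ∈ maxMons X := by
  simp only [maxMons, mem_filter] at hmax ⊢
  exact ⟨ha, fun b hb hab => f.injective (hmax.2 _ (hXZ b hb) (f.monotone hab))⟩

noncomputable def unionDisjointVars (X : Finset (Fin p → ℕ)) (Y : Finset (Fin q → ℕ)) :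
    Finset (Fin (p + q) → ℕ) :=
  X.map (inlMon q).toEmbedding ∪ Y.map (inrMon p).toEmbedding

variable {X : Finset (Fin p → ℕ)} {Y : Finset (Fin q → ℕ)}

theorem mem_unionDisjointVars {m : Fin (p + q) → ℕ} :
    m ∈ unionDisjointVars X Y ↔ (∃ a ∈ X, inlMon q a = m) ∨ ∃ b ∈ Y, inrMon p b = m := by
  simp [unionDisjointVars]

theorem IsOrderIdeal.unionDisjointVars (hX : IsOrderIdeal X) (hY : IsOrderIdeal Y) :
    IsOrderIdeal (unionDisjointVars X Y) := by
  obtain ⟨⟨a, ha⟩, hXcl⟩ := hX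
  refine ⟨⟨inlMon q a, mem_unionDisjointVars.2 (.inl ⟨a, ha, rfl⟩)⟩, fun m hm n hn => ?_⟩
  rw [mem_unionDisjointVars] at hm ⊢
  obtain ⟨a, ha, rfl⟩ | ⟨b, hb, rfl⟩ := hm
  · obtain ⟨a', ha', rfl⟩ := exists_eq_inlMon_of_le hn
    exact .inl ⟨a', hXcl a ha a' ha', rfl⟩
  · obtain ⟨b', hb', rfl⟩ := exists_eq_inrMon_of_le hn
    exact .inr ⟨b', hY.2 b hb b' hb', rfl⟩

theorem IsPure.unionDisjointVars {e : ℕ} (hX : IsPure X e) (hY : IsPure Y e) :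
    IsPure (unionDisjointVars X Y) e := by
  intro m hm
  obtain ⟨a, ha, rfl⟩ | ⟨b, hb, rfl⟩ := mem_unionDisjointVars.1 (mem_filter.1 hm).1
  · rw [mdeg_inlMon]
    exact hX a (mem_maxMons_of_map (fun b hb => mem_unionDisjointVars.2 (.inl ⟨b, hb, rfl⟩)) ha hm)
  · rw [mdeg_inrMon]
    exact hY b (mem_maxMons_of_map (fun b hb => mem_unionDisjointVars.2 (.inr ⟨b, hb, rfl⟩)) hb hm)

theorem hVec_unionDisjointVars {i : ℕ} (hi : i ≠ 0) :
    hVec (unionDisjointVars X Y) i = hVec X i + hVec Y i := by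
  rw [unionDisjointVars, hVec_union, hVec_map mdeg_inlMon, hVec_map mdeg_inrMon]
  simp only [mem_map, RelEmbedding.coe_toEmbedding]
  rintro _ ⟨a, -, rfl⟩ ⟨b, -, hba⟩
  rw [(inlMon_eq_inrMon_iff.1 hba.symm).1, mdeg_inlMon, mdeg_eq_zero_iff.2 rfl]
  exact hi.symm

end OrderIdeals

/-- If `h'` and `h''` are pure `O`-sequences of the same socle degree `e`, then
`(1, h'_1 + h''_1, ..., h'_e + h''_e)` is a pure `O`-sequence. -/
theorem stmt9 (e : ℕ) (h' h'' : ℕ → ℕ)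
    (H' : IsPureOSeqFun e h') (H'' : IsPureOSeqFun e h'') :
    IsPureOSeqFun e (fun i => if i = 0 then 1 else h' i + h'' i) := by
  obtain ⟨r', X', hX', hpure', hvec'⟩ := H'
  obtain ⟨r'', X'', hX'', hpure'', hvec''⟩ := H''
  have hX := hX'.unionDisjointVars hX''
  refine ⟨r' + r'', unionDisjointVars X' X'', hX, hpure'.unionDisjointVars hpure'', fun i => ?_⟩
  dsimp only
  split_ifs with hi
  · exact hi ▸ hX.hVec_zero
  · rw [hVec_unionDisjointVars hi, hvec', hvec'']
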